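/- Let R₁, R₂, ξ₁, ξ₂ be independent random variables with R₁, R₂ ∈ [0,1] a.s. and ξ₁, ξ₂ ~ N(0,1). Define R = R₁R₂ and ξ = (√((1−R₁)R₂)/√(1−R)·1_{R<1} + 1_{R=1})·ξ₁ + (√(1−R₂)/√(1−R))·1_{R<1}·ξ₂. Then ξ is standard Gaussian and independent of R. -/

import Mathlib

/-!
Write `a = mixCoeff₁`, `b = mixCoeff₂` for the coefficients of `ξ₁`, `ξ₂` in `ξ` as functions
of `r = (R₁, R₂)`, so that `ξ = a(R₁, R₂) ξ₁ + b(R₁, R₂) ξ₂`. On `[0,1]²` one has `a² + b² = 1`,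
because `(1 - r₁) r₂ + (1 - r₂) = 1 - r₁ r₂`. Since `(ξ₁, ξ₂)` is standard Gaussian and
independent of `(R₁, R₂)`, conditionally on `(R₁, R₂) = r` the variable `ξ` is
`N(0, a² + b²) = N(0, 1)` whatever `r` is. Hence the joint law of `(ξ, (R₁, R₂))` is
`N(0,1) ⊗ law(R₁, R₂)`: `ξ` is standard Gaussian and independent of `(R₁, R₂)`, a fortiori of
`R = R₁ R₂`.
-/

open MeasureTheory ProbabilityTheory Real
open scoped NNReal

lemma gaussianReal_prod_map_linear (m₁ m₂ : ℝ) (v₁ v₂ : ℝ≥0) (a b : ℝ) :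
    ((gaussianReal m₁ v₁).prod (gaussianReal m₂ v₂)).map (fun z : ℝ × ℝ => a * z.1 + b * z.2)
      = gaussianReal (a * m₁ + b * m₂)
          (.mk (a ^ 2) (sq_nonneg _) * v₁ + .mk (b ^ 2) (sq_nonneg _) * v₂) := by
  have hindep := indepFun_prod (μ := gaussianReal m₁ v₁) (ν := gaussianReal m₂ v₂)
    (measurable_const_mul a) (measurable_const_mul b)
  refine gaussianReal_add_gaussianReal_of_indepFun hindep ?_ ?_
  · rw [← Function.comp_def (a * ·), ← Measure.map_map (by fun_prop) measurable_fst,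
      Measure.map_fst_prod, measure_univ, one_smul, gaussianReal_map_const_mul]
  · rw [← Function.comp_def (b * ·), ← Measure.map_map (by fun_prop) measurable_snd,
      Measure.map_snd_prod, measure_univ, one_smul, gaussianReal_map_const_mul]

lemma gaussianReal_prod_map_linear_of_sq_add_sq_eq_one {a b : ℝ} (hab : a ^ 2 + b ^ 2 = 1) :
    ((gaussianReal 0 1).prod (gaussianReal 0 1)).map (fun z : ℝ × ℝ => a * z.1 + b * z.2)
      = gaussianReal 0 1 := by
  rw [gaussianReal_prod_map_linear]
  congr 1
  · ring
  · ext
    simpa only [NNReal.coe_add, NNReal.coe_mul, NNReal.coe_mk, NNReal.coe_one, mul_one] using hab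

theorem map_prodMk_eq_prod_of_indepFun {Ω E F G : Type*} [MeasurableSpace Ω]
    [MeasurableSpace E] [MeasurableSpace F] [MeasurableSpace G]
    {μ : Measure Ω} [IsFiniteMeasure μ] {V : Ω → E} {Z : Ω → F} {f : E × F → G}
    {ν : Measure G} [SigmaFinite ν]
    (hV : Measurable V) (hZ : Measurable Z) (hf : Measurable f) (hVZ : IndepFun V Z μ)
    (hlaw : ∀ᵐ v ∂μ.map V, (μ.map Z).map (fun z => f (v, z)) = ν) :
    μ.map (fun ω => (f (V ω, Z ω), V ω)) = ν.prod (μ.map V) := by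
  set P : E × F → G × E := fun p => (f p, p.1)
  have hP : Measurable P := hf.prodMk measurable_fst
  have hcomp : (fun ω => (f (V ω, Z ω), V ω)) = P ∘ fun ω => (V ω, Z ω) := rfl
  rw [hcomp, ← Measure.map_map hP (hV.prodMk hZ),
    (indepFun_iff_map_prod_eq_prod_map_map hV.aemeasurable hZ.aemeasurable).mp hVZ]
  refine (Measure.prod_eq fun s t hs ht => ?_).symm
  rw [Measure.map_apply hP (hs.prod ht), Measure.prod_apply (hP (hs.prod ht))]
  have hsection : ∀ᵐ v ∂μ.map V,
      μ.map Z (Prod.mk v ⁻¹' (P ⁻¹' s ×ˢ t)) = t.indicator (fun _ => ν s) v := by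
    filter_upwards [hlaw] with v hv
    by_cases hvt : v ∈ t
    · have : Prod.mk v ⁻¹' (P ⁻¹' s ×ˢ t) = (fun z => f (v, z)) ⁻¹' s := by
        ext z; simp [P, hvt]
      rw [this, ← Measure.map_apply (by fun_prop) hs, hv, Set.indicator_of_mem hvt]
    · have : Prod.mk v ⁻¹' (P ⁻¹' s ×ˢ t) = ∅ := by
        ext z; simp [P, hvt]
      rw [this, measure_empty, Set.indicator_of_notMem hvt]
  rw [lintegral_congr_ae hsection, lintegral_indicator_const ht]

theorem map_eq_and_indepFun_of_indepFun {Ω E F G : Type*} [MeasurableSpace Ω]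
    [MeasurableSpace E] [MeasurableSpace F] [MeasurableSpace G]
    {μ : Measure Ω} [IsProbabilityMeasure μ] {V : Ω → E} {Z : Ω → F} {f : E × F → G}
    {ν : Measure G} [SigmaFinite ν]
    (hV : Measurable V) (hZ : Measurable Z) (hf : Measurable f) (hVZ : IndepFun V Z μ)
    (hlaw : ∀ᵐ v ∂μ.map V, (μ.map Z).map (fun z => f (v, z)) = ν) :
    μ.map (fun ω => f (V ω, Z ω)) = ν ∧ IndepFun (fun ω => f (V ω, Z ω)) V μ := by
  have hfVZ : Measurable fun ω => f (V ω, Z ω) := hf.comp (hV.prodMk hZ)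
  have : IsProbabilityMeasure (μ.map V) := Measure.isProbabilityMeasure_map hV.aemeasurable
  have hjoint := map_prodMk_eq_prod_of_indepFun hV hZ hf hVZ hlaw
  have hmarginal : μ.map (fun ω => f (V ω, Z ω)) = ν :=
    calc μ.map (fun ω => f (V ω, Z ω))
        = (μ.map fun ω => (f (V ω, Z ω), V ω)).map Prod.fst := by
          rw [Measure.map_map measurable_fst (hfVZ.prodMk hV)]; rfl
      _ = ν := by rw [hjoint, Measure.map_fst_prod, measure_univ, one_smul]
  refine ⟨hmarginal, ?_⟩
  rw [indepFun_iff_map_prod_eq_prod_map_map hfVZ.aemeasurable hV.aemeasurable, hmarginal]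
  exact hjoint

noncomputable def mixCoeff₁ (r : ℝ × ℝ) : ℝ :=
  if r.1 * r.2 < 1 then √((1 - r.1) * r.2) / √(1 - r.1 * r.2) else 1

noncomputable def mixCoeff₂ (r : ℝ × ℝ) : ℝ :=
  if r.1 * r.2 < 1 then √(1 - r.2) / √(1 - r.1 * r.2) else 0

@[fun_prop]
lemma measurable_mixCoeff₁ : Measurable mixCoeff₁ :=
  Measurable.ite (measurableSet_lt (by fun_prop) measurable_const) (by fun_prop) measurable_const

@[fun_prop]
lemma measurable_mixCoeff₂ : Measurable mixCoeff₂ :=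
  Measurable.ite (measurableSet_lt (by fun_prop) measurable_const) (by fun_prop) measurable_const

lemma mixCoeff₁_sq_add_mixCoeff₂_sq {r : ℝ × ℝ}
    (hr : r ∈ Set.Icc (0 : ℝ) 1 ×ˢ Set.Icc (0 : ℝ) 1) :
    mixCoeff₁ r ^ 2 + mixCoeff₂ r ^ 2 = 1 := by
  obtain ⟨⟨h₁0, h₁1⟩, ⟨h₂0, h₂1⟩⟩ := hr
  by_cases h : r.1 * r.2 < 1
  · have hpos : 0 < 1 - r.1 * r.2 := by linarith
    simp only [mixCoeff₁, mixCoeff₂, if_pos h]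
    rw [div_pow, div_pow, sq_sqrt (mul_nonneg (by linarith) h₂0),
      sq_sqrt (show 0 ≤ 1 - r.2 by linarith), sq_sqrt hpos.le, ← add_div,
      div_eq_one_iff_eq hpos.ne']
    ring
  · simp [mixCoeff₁, mixCoeff₂, h]

theorem stmt4 {Ω : Type*} [MeasurableSpace Ω] (μ : Measure Ω) [IsProbabilityMeasure μ]
    (R₁ R₂ ξ₁ ξ₂ : Ω → ℝ) (hR₁ : Measurable R₁) (hR₂ : Measurable R₂)
    (hξ₁ : Measurable ξ₁) (hξ₂ : Measurable ξ₂)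
    (hind : iIndepFun ![R₁, R₂, ξ₁, ξ₂] μ)
    (hR₁01 : ∀ᵐ ω ∂μ, R₁ ω ∈ Set.Icc (0:ℝ) 1)
    (hR₂01 : ∀ᵐ ω ∂μ, R₂ ω ∈ Set.Icc (0:ℝ) 1)
    (hξ₁law : μ.map ξ₁ = gaussianReal 0 1)
    (hξ₂law : μ.map ξ₂ = gaussianReal 0 1)
    (R ξ : Ω → ℝ)
    (hR : R = fun ω => R₁ ω * R₂ ω)
    (hξ : ξ = fun ω =>
      (if R ω < 1 then Real.sqrt ((1 - R₁ ω) * R₂ ω) / Real.sqrt (1 - R ω) else 1) * ξ₁ ω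
      + (if R ω < 1 then Real.sqrt (1 - R₂ ω) / Real.sqrt (1 - R ω) else 0) * ξ₂ ω) :
    μ.map ξ = gaussianReal 0 1 ∧ IndepFun ξ R μ := by
  subst hR hξ
  have hV : Measurable fun ω => (R₁ ω, R₂ ω) := hR₁.prodMk hR₂
  have hVZ : IndepFun (fun ω => (R₁ ω, R₂ ω)) (fun ω => (ξ₁ ω, ξ₂ ω)) μ :=
    hind.indepFun_prodMk_prodMk (fun i => by fin_cases i <;> assumption) 0 1 2 3
      (by decide) (by decide) (by decide) (by decide)
  have hZlaw : μ.map (fun ω => (ξ₁ ω, ξ₂ ω)) = (gaussianReal 0 1).prod (gaussianReal 0 1) := by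
    rw [(hind.indepFun (show (2 : Fin 4) ≠ 3 by decide)).map_prod_eq_prod_map_map
      hξ₁.aemeasurable hξ₂.aemeasurable, hξ₁law, hξ₂law]
  have hsection : ∀ᵐ r ∂μ.map (fun ω => (R₁ ω, R₂ ω)),
      (μ.map fun ω => (ξ₁ ω, ξ₂ ω)).map (fun z => mixCoeff₁ r * z.1 + mixCoeff₂ r * z.2)
        = gaussianReal 0 1 := by
    have hunit : ∀ᵐ r ∂μ.map (fun ω => (R₁ ω, R₂ ω)),
        r ∈ Set.Icc (0 : ℝ) 1 ×ˢ Set.Icc (0 : ℝ) 1 :=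
      (ae_map_iff hV.aemeasurable (measurableSet_Icc.prod measurableSet_Icc)).mpr
        (hR₁01.and hR₂01)
    filter_upwards [hunit] with r hr
    rw [hZlaw,
      gaussianReal_prod_map_linear_of_sq_add_sq_eq_one (mixCoeff₁_sq_add_mixCoeff₂_sq hr)]
  obtain ⟨hlaw, hindep⟩ := map_eq_and_indepFun_of_indepFun hV (hξ₁.prodMk hξ₂)
    (f := fun p : (ℝ × ℝ) × (ℝ × ℝ) => mixCoeff₁ p.1 * p.2.1 + mixCoeff₂ p.1 * p.2.2)
    (by fun_prop) hVZ hsection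
  exact ⟨hlaw, hindep.comp measurable_id (measurable_fst.mul measurable_snd)⟩
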